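/- If P and Q are s–t paths in an acyclic network whose vertices χ^P and χ^Q are nonadjacent in the flow polytope F(D), then there exist two other s–t paths R and S with (χ^P + χ^Q)/2 = (χ^R + χ^S)/2 and {χ^R, χ^S} ≠ {χ^P, χ^Q}. In particular, F(D) is a combinatorial polytope in the sense of Naddef and Pulleyblank. -/

import Mathlib

/-!
If `P` and `Q` cross at a node `v`, i.e. pass through `v` but agree neither before nor after
it, exchanging their tails at `v` gives two `s`–`t` paths `R`, `S` with
`χ^R + χ^S = χ^P + χ^Q`. Acyclicity keeps `R` and `S` simple, and a path is determined by its
arc set, so `{χ^R, χ^S} ≠ {χ^P, χ^Q}`.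

Otherwise `P` and `Q` share a prefix up to a node `a` and a suffix from a node `b`, and are
internally disjoint in between. A value-one flow supported on the arcs of `P ∪ Q` is then, by
conservation, constant on each of the two branches from `a` to `b`, say `λ` and `μ`, equal to
`1` on the common arcs, and `λ + μ = 1` at `a`; that is, it equals `λ χ^P + μ χ^Q`. Hence the
face of `F(D)` on which every arc outside `P ∪ Q` vanishes is the segment `[χ^P, χ^Q]`, and
`χ^P`, `χ^Q` are adjacent.
-/

open scoped Classical

variable {V : Type*} [Fintype V] [DecidableEq V]

/-- A directed graph (arc set `A`) is acyclic: no directed cycle. -/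
def Acyclic (A : Finset (V × V)) : Prop :=
  ∀ v : V, ¬ Relation.TransGen (fun u w => (u, w) ∈ A) v v

/-- Sum of `x` over the arcs of `A` with tail `v`. -/
noncomputable def outSum (A : Finset (V × V)) (x : V × V → ℝ) (v : V) : ℝ :=
  ∑ a ∈ A.filter (fun a => a.1 = v), x a

/-- Sum of `x` over the arcs of `A` with head `v`. -/
noncomputable def inSum (A : Finset (V × V)) (x : V × V → ℝ) (v : V) : ℝ :=
  ∑ a ∈ A.filter (fun a => a.2 = v), x a

/-- A flow of value 1 in the network `(V, A, s, t)`. -/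
def IsFlow (A : Finset (V × V)) (s t : V) (x : V × V → ℝ) : Prop :=
  (∀ a, a ∉ A → x a = 0) ∧ (∀ a, 0 ≤ x a) ∧
    (∀ v, v ≠ s → v ≠ t → outSum A x v = inSum A x v) ∧
    outSum A x s - inSum A x s = 1

/-- The flow polytope: all value-1 flows, as a subset of `ℝ^(V × V)`. -/
def flowPolytope (A : Finset (V × V)) (s t : V) : Set ((V × V) → ℝ) :=
  {x | IsFlow A s t x}

/-- An `s`–`t` path, given by its list of nodes. -/
def IsPath (A : Finset (V × V)) (s t : V) (p : List V) : Prop :=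
  p.Chain' (fun u v => (u, v) ∈ A) ∧ p.head? = some s ∧ p.getLast? = some t ∧ p.Nodup

/-- The arcs of a path given by its node list. -/
def pathEdges (p : List V) : List (V × V) := p.zip p.tail

/-- Characteristic vector of (the arc set of) a path. -/
def chi (p : List V) : (V × V) → ℝ := fun a => if a ∈ pathEdges p then 1 else 0

/-- Two vertices of a polytope `S` are adjacent when the segment joining them is a
(one-dimensional) face of `S`, i.e. an exposed face. -/
def AdjacentVerts (S : Set ((V × V) → ℝ)) (x y : (V × V) → ℝ) : Prop :=
  x ≠ y ∧ IsExposed ℝ S (segment ℝ x y)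

/-- A facet: a proper maximal (exposed) face. -/
def IsFacetOf (S F : Set ((V × V) → ℝ)) : Prop :=
  IsExposed ℝ S F ∧ F ≠ S ∧ ∀ G, IsExposed ℝ S G → G ≠ S → F ⊆ G → G = F

section Lists

-- A fresh `V`: most lemmas need neither `Fintype V` nor `DecidableEq V`.
variable {V : Type*}

theorem pathEdges_cons_cons (a b : V) (l : List V) :
    pathEdges (a :: b :: l) = (a, b) :: pathEdges (b :: l) := rfl

theorem mem_pathEdges_iff {u v : V} :
    ∀ {l : List V}, (u, v) ∈ pathEdges l ↔ ∃ l₁ l₂, l = l₁ ++ u :: v :: l₂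
  | [] => by simp [pathEdges]
  | [a] => by
    simp only [pathEdges, List.tail_cons, List.zip_nil_right, List.not_mem_nil, false_iff]
    rintro ⟨l₁, l₂, h⟩
    have := congrArg List.length h
    simp at this
    omega
  | a :: b :: l => by
    rw [pathEdges_cons_cons, List.mem_cons, mem_pathEdges_iff]
    constructor
    · rintro (h | ⟨l₁, l₂, h⟩)
      · obtain ⟨rfl, rfl⟩ := Prod.mk.inj h
        exact ⟨[], l, rfl⟩
      · exact ⟨a :: l₁, l₂, by rw [h]; rfl⟩
    · rintro ⟨_ | ⟨c, l₁⟩, l₂, h⟩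
      · simp_all
      · exact Or.inr ⟨l₁, l₂, (List.cons.inj h).2⟩

theorem mem_of_mem_pathEdges {l : List V} {u v : V} (h : (u, v) ∈ pathEdges l) :
    u ∈ l ∧ v ∈ l := by
  obtain ⟨l₁, l₂, rfl⟩ := mem_pathEdges_iff.1 h
  simp

theorem List.IsInfix.pathEdges_subset {l m : List V} (h : l <:+: m) :
    pathEdges l ⊆ pathEdges m := by
  rintro ⟨u, v⟩ he
  obtain ⟨l₁, l₂, rfl⟩ := mem_pathEdges_iff.1 he
  obtain ⟨L₁, L₂, rfl⟩ := h
  exact mem_pathEdges_iff.2 ⟨L₁ ++ l₁, l₂ ++ L₂, by simp⟩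

theorem List.IsChain.rel_of_mem_pathEdges {R : V → V → Prop} {l : List V} (hl : l.IsChain R)
    {u v : V} (h : (u, v) ∈ pathEdges l) : R u v := by
  obtain ⟨l₁, l₂, rfl⟩ := mem_pathEdges_iff.1 h
  exact List.isChain_pair.1 (hl.infix ⟨l₁, l₂, by simp⟩)

theorem pathEdges_append (v : V) : ∀ l₁ l₂ : List V,
    pathEdges (l₁ ++ v :: l₂) = pathEdges (l₁ ++ [v]) ++ pathEdges (v :: l₂)
  | [], _ => rfl
  | [_], _ => rfl
  | a :: b :: l₁, l₂ => by
    have ih := pathEdges_append v (b :: l₁) l₂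
    simp only [List.cons_append] at ih ⊢
    rw [pathEdges_cons_cons, ih]
    rfl

theorem List.Nodup.append_cons_inj {l₁ l₂ m₁ m₂ : List V} {c : V}
    (hn : (l₁ ++ c :: l₂).Nodup) (h : l₁ ++ c :: l₂ = m₁ ++ c :: m₂) : l₁ = m₁ ∧ l₂ = m₂ := by
  have hl : c ∉ l₁ := fun hc => (List.nodup_append.1 hn).2.2 c hc c List.mem_cons_self rfl
  have hm : c ∉ m₁ := fun hc =>
    (List.nodup_append.1 (h ▸ hn)).2.2 c hc c List.mem_cons_self rfl
  have hlen : l₁.length = m₁.length := by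
    simpa [List.idxOf_append_of_notMem hl, List.idxOf_append_of_notMem hm]
      using congrArg (List.idxOf c) h
  obtain ⟨h₁, h₂⟩ := List.append_inj h hlen
  exact ⟨h₁, List.cons_inj_right c |>.1 h₂⟩

theorem snd_eq_of_mem_pathEdges {l : List V} (hl : l.Nodup) {u v w : V}
    (hv : (u, v) ∈ pathEdges l) (hw : (u, w) ∈ pathEdges l) : v = w := by
  obtain ⟨l₁, l₂, rfl⟩ := mem_pathEdges_iff.1 hv
  obtain ⟨m₁, m₂, h⟩ := mem_pathEdges_iff.1 hw
  exact List.head_eq_of_cons_eq (hl.append_cons_inj h).2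

theorem fst_eq_of_mem_pathEdges {l : List V} (hl : l.Nodup) {u v w : V}
    (hu : (u, w) ∈ pathEdges l) (hv : (v, w) ∈ pathEdges l) : u = v := by
  obtain ⟨l₁, l₂, rfl⟩ := mem_pathEdges_iff.1 hu
  obtain ⟨m₁, m₂, h⟩ := mem_pathEdges_iff.1 hv
  have h' : (l₁ ++ [u]) ++ w :: l₂ = (m₁ ++ [v]) ++ w :: m₂ := by simpa using h
  have hl' : ((l₁ ++ [u]) ++ w :: l₂).Nodup := by simpa using hl
  simpa using congrArg List.getLast? (hl'.append_cons_inj h').1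

theorem snd_ne_of_head?_eq {l : List V} (hl : l.Nodup) {a u v : V} (ha : l.head? = some a)
    (h : (u, v) ∈ pathEdges l) : v ≠ a := by
  obtain ⟨l₁, l₂, rfl⟩ := mem_pathEdges_iff.1 h
  rintro rfl
  rcases l₁ with _ | ⟨c, l₁⟩ <;> simp_all [List.nodup_append]

theorem fst_ne_of_getLast?_eq {l : List V} (hl : l.Nodup) {b u v : V}
    (hb : l.getLast? = some b) (h : (u, v) ∈ pathEdges l) : u ≠ b := by
  obtain ⟨l₁, l₂, rfl⟩ := mem_pathEdges_iff.1 h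
  rintro rfl
  rw [List.getLast?_append_cons] at hb
  exact (List.nodup_cons.1 (List.nodup_append.1 hl).2.1).1 (List.mem_of_getLast? hb)

theorem exists_mem_pathEdges_of_getLast?_ne {l : List V} {u : V} (hu : u ∈ l)
    (h : l.getLast? ≠ some u) : ∃ v, (u, v) ∈ pathEdges l := by
  obtain ⟨l₁, l₂, rfl⟩ := List.append_of_mem hu
  rcases l₂ with _ | ⟨v, l₂⟩
  · simp at h
  · exact ⟨v, mem_pathEdges_iff.2 ⟨l₁, l₂, rfl⟩⟩

theorem exists_mem_pathEdges_of_head?_ne {l : List V} {v : V} (hv : v ∈ l)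
    (h : l.head? ≠ some v) : ∃ u, (u, v) ∈ pathEdges l := by
  obtain ⟨l₁, l₂, rfl⟩ := List.append_of_mem hv
  obtain rfl | ⟨l₁, u, rfl⟩ := l₁.eq_nil_or_concat'
  · simp at h
  · exact ⟨u, mem_pathEdges_iff.2 ⟨l₁, l₂, by simp⟩⟩

theorem mem_pathEdges_iff_of_nodup_cons {a : V} {l : List V} (h : (a :: l).Nodup)
    {e : V × V} : e ∈ pathEdges l ↔ e ∈ pathEdges (a :: l) ∧ e.1 ≠ a := by
  rcases l with _ | ⟨b, l⟩
  · simp [pathEdges]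
  · obtain ⟨u, v⟩ := e
    have hu : (u, v) ∈ pathEdges (b :: l) → u ≠ a := fun he hua =>
      (List.nodup_cons.1 h).1 (hua ▸ (mem_of_mem_pathEdges he).1)
    rw [pathEdges_cons_cons, List.mem_cons]
    grind

theorem eq_of_forall_mem_pathEdges_iff :
    ∀ {l m : List V}, l.Nodup → m.Nodup → l.head? = m.head? →
      (∀ e, e ∈ pathEdges l ↔ e ∈ pathEdges m) → l = m
  | [], _, _, _, h, _ => (List.head?_eq_none_iff.1 h.symm).symm
  | [a], m, _, _, h, he => by
    obtain ⟨_ | ⟨c, m⟩, rfl⟩ := List.head?_eq_some_iff.1 h.symm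
    · rfl
    · simpa [pathEdges] using (he (a, c)).2 (by simp [pathEdges_cons_cons])
  | a :: b :: l, m, hl, hm, h, he => by
    obtain ⟨m, rfl⟩ := List.head?_eq_some_iff.1 h.symm
    have hab := (he (a, b)).1 (by simp [pathEdges_cons_cons])
    rcases m with _ | ⟨c, m⟩
    · simp [pathEdges] at hab
    obtain rfl : b = c := snd_eq_of_mem_pathEdges hm hab (by simp [pathEdges_cons_cons])
    rw [eq_of_forall_mem_pathEdges_iff hl.of_cons hm.of_cons rfl fun e => by
      rw [mem_pathEdges_iff_of_nodup_cons hl, mem_pathEdges_iff_of_nodup_cons hm, he]]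

theorem eq_of_forall_adjacent_arcs {β : Type*} {f : V × V → β} :
    ∀ {l : List V}, (∀ y z w, (y, z) ∈ pathEdges l → (z, w) ∈ pathEdges l → f (y, z) = f (z, w)) →
      ∀ {e e' : V × V}, e ∈ pathEdges l → e' ∈ pathEdges l → f e = f e'
  | [], _, _, _, he, _ => by simp [pathEdges] at he
  | [_], _, _, _, he, _ => by simp [pathEdges] at he
  | u :: v :: l, hf, e, e', he, he' => by
    suffices h : ∀ g ∈ pathEdges (u :: v :: l), f g = f (u, v) by rw [h e he, h e' he']
    intro g hg
    rw [pathEdges_cons_cons, List.mem_cons] at hg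
    rcases hg with rfl | hg
    · rfl
    rcases l with _ | ⟨w, l⟩
    · simp [pathEdges] at hg
    have hvw : (v, w) ∈ pathEdges (v :: w :: l) := by simp [pathEdges_cons_cons]
    have hsub : pathEdges (v :: w :: l) ⊆ pathEdges (u :: v :: w :: l) :=
      List.subset_cons_self _ _
    rw [eq_of_forall_adjacent_arcs (l := v :: w :: l)
      (fun y z w' h₁ h₂ => hf y z w' (hsub h₁) (hsub h₂)) hg hvw]
    exact (hf u v w (by simp [pathEdges_cons_cons]) (by simp [pathEdges_cons_cons])).symm

theorem pathEdges_detour (C α Z : List V) (a b : V) :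
    pathEdges (C ++ a :: (α ++ b :: Z)) =
      pathEdges (C ++ [a]) ++ (pathEdges (a :: (α ++ [b])) ++ pathEdges (b :: Z)) := by
  rw [pathEdges_append a C, ← List.cons_append, pathEdges_append b (a :: α) Z]
  rfl

end Lists

section Paths

variable {V : Type*} {A : Finset (V × V)} {s t : V}

theorem IsPath.eq_singleton {p : List V} (hp : IsPath A s s p) : p = [s] := by
  obtain ⟨-, hhead, hlast, hnd⟩ := hp
  obtain ⟨_ | ⟨c, p⟩, rfl⟩ := List.head?_eq_some_iff.1 hhead
  · rfl
  · rw [List.getLast?_cons_cons] at hlast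
    exact absurd (List.mem_of_getLast? hlast) (List.nodup_cons.1 hnd).1

theorem IsPath.source_ne_target_of_ne {p q : List V} (hp : IsPath A s t p) (hq : IsPath A s t q)
    (hpq : p ≠ q) : s ≠ t := by
  rintro rfl
  exact hpq (hp.eq_singleton.trans hq.eq_singleton.symm)

theorem IsPath.eq_of_chi_eq [DecidableEq V] {p q : List V} (hp : IsPath A s t p)
    (hq : IsPath A s t q) (h : chi p = chi q) : p = q :=
  eq_of_forall_mem_pathEdges_iff hp.2.2.2 hq.2.2.2 (hp.2.1.trans hq.2.1.symm) fun e => by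
    have := congrFun h e
    unfold chi at this
    split_ifs at this <;> simp_all

theorem IsPath.prefix {l₁ l₂ : List V} {v : V} (h : IsPath A s t (l₁ ++ v :: l₂)) :
    IsPath A s v (l₁ ++ [v]) := by
  obtain ⟨hc, hh, -, hn⟩ := h
  have hinf : l₁ ++ [v] <:+: l₁ ++ v :: l₂ := ⟨[], l₂, by simp⟩
  exact ⟨List.IsChain.infix hc hinf, by simpa [List.head?_append] using hh, List.getLast?_concat,
    hinf.nodup hn⟩

theorem IsPath.suffix {l₁ l₂ : List V} {v : V} (h : IsPath A s t (l₁ ++ v :: l₂)) :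
    IsPath A v t (v :: l₂) := by
  obtain ⟨hc, -, hl, hn⟩ := h
  have hinf : v :: l₂ <:+: l₁ ++ v :: l₂ := ⟨l₁, [], by simp⟩
  exact ⟨List.IsChain.infix hc hinf, rfl, by rwa [List.getLast?_append_cons] at hl,
    hinf.nodup hn⟩

theorem IsPath.append {l₁ l₂ : List V} {v : V} (h₁ : IsPath A s v (l₁ ++ [v]))
    (h₂ : IsPath A v t (v :: l₂)) (hd : ∀ z ∈ l₁, z ∉ v :: l₂) :
    IsPath A s t (l₁ ++ v :: l₂) := by
  obtain ⟨hc₁, hh₁, -, hn₁⟩ := h₁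
  obtain ⟨hc₂, -, hl₂, hn₂⟩ := h₂
  refine ⟨?_, by simpa [List.head?_append] using hh₁, by rwa [List.getLast?_append_cons], ?_⟩
  · have hc := List.IsChain.append_overlap (l₃ := l₂) hc₁ hc₂ (List.cons_ne_nil v [])
    simp only [List.append_assoc, List.singleton_append] at hc
    exact hc
  · exact List.nodup_append.2
      ⟨(List.nodup_append.1 hn₁).1, hn₂, fun a ha b hb hab => hd a ha (hab ▸ hb)⟩

theorem IsPath.pairwise_transGen {p : List V} (hp : IsPath A s t p) :
    p.Pairwise (Relation.TransGen fun u w => (u, w) ∈ A) :=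
  List.isChain_iff_pairwise.1 (List.IsChain.imp (fun _ _ => Relation.TransGen.single) hp.1)

theorem Acyclic.not_mem_of_mem_prefix (hA : Acyclic A) {p₁ p₂ q₁ q₂ : List V} {v z : V}
    (hp : IsPath A s t (p₁ ++ v :: p₂)) (hq : IsPath A s t (q₁ ++ v :: q₂)) (hz : z ∈ p₁) :
    z ∉ v :: q₂ := by
  have hzv := (List.pairwise_append.1 hp.pairwise_transGen).2.2 z hz v List.mem_cons_self
  intro hz'
  rcases List.mem_cons.1 hz' with rfl | hz'
  · exact hA z hzv
  · exact hA v ((List.pairwise_cons.1 (List.pairwise_append.1 hq.pairwise_transGen).2.1).1 z hz'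
      |>.trans hzv)

theorem chi_append [DecidableEq V] {l₁ l₂ : List V} {v : V} (h : (l₁ ++ v :: l₂).Nodup) :
    chi (l₁ ++ v :: l₂) = chi (l₁ ++ [v]) + chi (v :: l₂) := by
  have hdisj : ∀ e ∈ pathEdges (l₁ ++ [v]), e ∉ pathEdges (v :: l₂) := by
    rintro ⟨u, w⟩ h₁ h₂
    have hu : u ∈ l₁ := by
      have hn : (l₁ ++ [v]).Nodup := List.IsInfix.nodup ⟨[], l₂, by simp⟩ h
      simpa [fst_ne_of_getLast?_eq hn List.getLast?_concat h₁] using (mem_of_mem_pathEdges h₁).1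
    exact (List.nodup_append.1 h).2.2 u hu u (mem_of_mem_pathEdges h₂).1 rfl
  funext e
  simp only [chi, pathEdges_append v l₁ l₂, List.mem_append, Pi.add_apply]
  by_cases h₁ : e ∈ pathEdges (l₁ ++ [v]) <;> by_cases h₂ : e ∈ pathEdges (v :: l₂) <;>
    simp [h₁, h₂]
  exact hdisj e h₁ h₂

def Crossing (p q : List V) : Prop :=
  ∃ v p₁ p₂ q₁ q₂, p = p₁ ++ v :: p₂ ∧ q = q₁ ++ v :: q₂ ∧ p₁ ≠ q₁ ∧ p₂ ≠ q₂

theorem exists_swap_of_crossing [DecidableEq V] (hA : Acyclic A) {p q : List V}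
    (hp : IsPath A s t p) (hq : IsPath A s t q) (hc : Crossing p q) :
    ∃ r u, IsPath A s t r ∧ IsPath A s t u ∧ chi p + chi q = chi r + chi u ∧ r ≠ p ∧ r ≠ q := by
  obtain ⟨v, p₁, p₂, q₁, q₂, rfl, rfl, h₁, h₂⟩ := hc
  have hr := hp.prefix.append hq.suffix fun z hz => hA.not_mem_of_mem_prefix hp hq hz
  have hu := hq.prefix.append hp.suffix fun z hz => hA.not_mem_of_mem_prefix hq hp hz
  refine ⟨p₁ ++ v :: q₂, q₁ ++ v :: p₂, hr, hu, ?_, fun h => h₂ ?_, fun h => h₁ ?_⟩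
  · rw [chi_append hp.2.2.2, chi_append hq.2.2.2, chi_append hr.2.2.2, chi_append hu.2.2.2]
    abel
  · exact ((List.cons_inj_right v).1 (List.append_cancel_left h)).symm
  · exact List.append_cancel_right h

theorem exists_branch : ∀ {l m : List V}, l.head? = m.head? → ¬ l <+: m → ¬ m <+: l →
    ∃ C a v w T₁ T₂, l = C ++ a :: v :: T₁ ∧ m = C ++ a :: w :: T₂ ∧ v ≠ w
  | [], _, _, h, _ => absurd List.nil_prefix h
  | _ :: _, [], _, _, h => absurd List.nil_prefix h
  | a :: l, b :: m, hh, h₁, h₂ => by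
    obtain rfl : a = b := by simpa using hh
    rcases l with _ | ⟨v, l⟩
    · exact absurd (by simp) h₁
    rcases m with _ | ⟨w, m⟩
    · exact absurd (by simp) h₂
    by_cases hvw : v = w
    · subst hvw
      obtain ⟨C, c, v', w', T₁, T₂, hl, hm, hne⟩ := exists_branch (l := v :: l) (m := v :: m) rfl
        (fun h => h₁ ((List.prefix_cons_inj a).2 h)) (fun h => h₂ ((List.prefix_cons_inj a).2 h))
      exact ⟨a :: C, c, v', w', T₁, T₂, by rw [hl]; rfl, by rw [hm]; rfl, hne⟩
    · exact ⟨[], a, v, w, l, m, rfl, rfl, hvw⟩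

theorem IsPath.not_prefix {p q : List V} (hp : IsPath A s t p) (hq : IsPath A s t q)
    (hpq : p ≠ q) : ¬ p <+: q := by
  rintro ⟨u, rfl⟩
  have hu : u ≠ [] := by rintro rfl; simp at hpq
  have htu : t ∈ u :=
    List.mem_of_getLast? (by rw [← List.getLast?_append_of_ne_nil p hu]; exact hq.2.2.1)
  exact (List.nodup_append.1 hq.2.2.2).2.2 t (List.mem_of_getLast? hp.2.2.1) t htu rfl

theorem exists_rejoin {C T₁ T₂ : List V} {a v w : V} (hp : IsPath A s t (C ++ a :: v :: T₁))
    (hq : IsPath A s t (C ++ a :: w :: T₂)) (hvw : v ≠ w)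
    (hc : ¬ Crossing (C ++ a :: v :: T₁) (C ++ a :: w :: T₂)) :
    ∃ α β b Z, v :: T₁ = α ++ b :: Z ∧ w :: T₂ = β ++ b :: Z ∧ ∀ z ∈ α, z ∉ w :: T₂ := by
  have hlast : ∀ {c : V} {T : List V}, IsPath A s t (C ++ a :: c :: T) → t ∈ c :: T := by
    intro c T h
    have h := h.2.2.1
    rw [List.getLast?_append_cons, List.getLast?_cons_cons] at h
    exact List.mem_of_getLast? h
  obtain ⟨b, hb⟩ : ∃ b, (v :: T₁).find? (· ∈ w :: T₂) = some b :=
    Option.ne_none_iff_exists'.1 fun h =>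
      List.find?_eq_none.1 h t (hlast hp) (by simpa using hlast hq)
  obtain ⟨hbq, α, Z, hT₁, hα⟩ := List.find?_eq_some_iff_append.1 hb
  obtain ⟨β, Z', hT₂⟩ := List.append_of_mem (by simpa using hbq : b ∈ w :: T₂)
  obtain rfl : Z = Z' := by
    by_contra hZ
    refine hc ⟨b, C ++ a :: α, Z, C ++ a :: β, Z', by rw [hT₁]; simp, by rw [hT₂]; simp,
      fun h => hvw ?_, hZ⟩
    obtain rfl : α = β := by simpa using h
    have h₁ := congrArg List.head? hT₁
    have h₂ := congrArg List.head? hT₂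
    simp only [List.head?_cons, List.head?_append] at h₁ h₂
    exact Option.some_inj.1 (h₁.trans h₂.symm)
  exact ⟨α, β, b, Z, hT₁, hT₂, fun z hz => by simpa using hα z hz⟩

theorem not_mem_of_not_crossing {C α β Z : List V} {a b u : V}
    (hp : (C ++ a :: (α ++ b :: Z)).Nodup) (hq : (C ++ a :: (β ++ b :: Z)).Nodup)
    (hα : ∀ z ∈ α, z ∉ C ++ a :: (β ++ b :: Z))
    (hc : ¬ Crossing (C ++ a :: (α ++ b :: Z)) (C ++ a :: (β ++ b :: Z))) (hu : u ∈ β) :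
    u ∉ C ++ a :: (α ++ b :: Z) := by
  intro hup
  have huZ : u ∈ Z := by
    have huq : u ∈ C ++ a :: (β ++ b :: Z) := by simp [hu]
    simp only [List.mem_append, List.mem_cons] at hup
    grind [List.nodup_append, List.nodup_cons]
  obtain ⟨Z₁, Z₂, rfl⟩ := List.append_of_mem huZ
  obtain ⟨β₁, β₂, rfl⟩ := List.append_of_mem hu
  -- the two paths would cross at `u`
  refine hc ⟨u, C ++ a :: (α ++ b :: Z₁), Z₂, C ++ a :: β₁, β₂ ++ b :: (Z₁ ++ u :: Z₂),
    by simp, by simp, fun h => ?_, fun h => ?_⟩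
  · have hb₁ : b ∈ C ++ a :: β₁ := h ▸ (by simp)
    simp only [List.mem_append, List.mem_cons] at hb₁
    grind [List.nodup_append, List.nodup_cons]
  · have := congrArg List.length h
    simp at this
    omega

theorem exists_detour {p q : List V} (hp : IsPath A s t p) (hq : IsPath A s t q) (hpq : p ≠ q)
    (hc : ¬ Crossing p q) :
    ∃ C a α β b Z v w, p = C ++ a :: (α ++ b :: Z) ∧ q = C ++ a :: (β ++ b :: Z) ∧
      (∀ z ∈ α, z ∉ q) ∧ (∀ z ∈ β, z ∉ p) ∧ v ≠ w ∧
      (a, v) ∈ pathEdges (a :: (α ++ [b])) ∧ (a, w) ∈ pathEdges (a :: (β ++ [b])) := by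
  obtain ⟨C, a, v, w, T₁, T₂, rfl, rfl, hvw⟩ := exists_branch (hp.2.1.trans hq.2.1.symm)
    (hp.not_prefix hq hpq) (hq.not_prefix hp hpq.symm)
  obtain ⟨α, β, b, Z, hT₁, hT₂, hα⟩ := exists_rejoin hp hq hvw hc
  have harc : ∀ {v : V} {T γ : List V}, v :: T = γ ++ b :: Z →
      (a, v) ∈ pathEdges (a :: (γ ++ [b])) := by
    intro v T γ h
    rcases γ with _ | ⟨c, γ⟩ <;>
    · simp only [List.nil_append, List.cons_append, List.cons.injEq] at h
      simp [h.1, pathEdges_cons_cons]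
  have hnp := hp.2.2.2
  have hnq := hq.2.2.2
  rw [hT₁] at hnp hc ⊢
  rw [hT₂] at hnq hc hα ⊢
  have hαq : ∀ z ∈ α, z ∉ C ++ a :: (β ++ b :: Z) := by
    intro z hz hzq
    have hzT := hα z hz
    simp only [List.mem_append, List.mem_cons] at hzq
    grind [List.nodup_append, List.nodup_cons]
  exact ⟨C, a, α, β, b, Z, v, w, rfl, rfl, hαq,
    fun u hu => not_mem_of_not_crossing hnp hnq hαq hc hu, hvw, harc hT₁, harc hT₂⟩

theorem not_mem_pathEdges_of_detour {p q C α β Z : List V} {a b v w : V} (hp : p.Nodup)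
    (hq : q.Nodup) (hpd : p = C ++ a :: (α ++ b :: Z)) (hqd : q = C ++ a :: (β ++ b :: Z))
    (hα : ∀ z ∈ α, z ∉ q) (hvw : v ≠ w) (hv : (a, v) ∈ pathEdges (a :: (α ++ [b])))
    (hw : (a, w) ∈ pathEdges (a :: (β ++ [b]))) {e : V × V}
    (he : e ∈ pathEdges (a :: (α ++ [b]))) : e ∉ pathEdges q := by
  obtain ⟨u, u'⟩ := e
  intro heq
  have hnd : (a :: (α ++ [b])).Nodup := List.IsInfix.nodup ⟨C, Z, by rw [hpd]; simp⟩ hp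
  have hub : u ≠ b :=
    fst_ne_of_getLast?_eq hnd (by rw [← List.cons_append, List.getLast?_concat]) he
  obtain rfl : u = a := by
    have hu := (mem_of_mem_pathEdges he).1
    simp only [List.mem_cons, List.mem_append, List.not_mem_nil, or_false] at hu
    rcases hu with hu | hu | hu
    · exact hu
    · exact absurd (mem_of_mem_pathEdges heq).1 (hα u hu)
    · exact absurd hu hub
  have hwq : (u, w) ∈ pathEdges q := List.IsInfix.pathEdges_subset ⟨C, Z, by rw [hqd]; simp⟩ hw
  exact hvw ((snd_eq_of_mem_pathEdges hnd hv he).trans (snd_eq_of_mem_pathEdges hq heq hwq))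

end Paths

section Flows

variable {V : Type*} [DecidableEq V] {A : Finset (V × V)} {s t : V} {x : V × V → ℝ}

theorem outSum_eq_sum {v : V} {S : Finset (V × V)} (hS : ∀ e ∈ S, e ∈ A ∧ e.1 = v)
    (hx : ∀ e, x e ≠ 0 → e.1 = v → e ∈ S) : outSum A x v = ∑ e ∈ S, x e := by
  refine (Finset.sum_subset (fun e he => Finset.mem_filter.2 (hS e he)) fun e he heS => ?_).symm
  by_contra h
  exact heS (hx e h (Finset.mem_filter.1 he).2)

theorem inSum_eq_sum {v : V} {S : Finset (V × V)} (hS : ∀ e ∈ S, e ∈ A ∧ e.2 = v)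
    (hx : ∀ e, x e ≠ 0 → e.2 = v → e ∈ S) : inSum A x v = ∑ e ∈ S, x e := by
  refine (Finset.sum_subset (fun e he => Finset.mem_filter.2 (hS e he)) fun e he heS => ?_).symm
  by_contra h
  exact heS (hx e h (Finset.mem_filter.1 he).2)

theorem outSum_smul_add_smul (y : V × V → ℝ) (a b : ℝ) (v : V) :
    outSum A (a • x + b • y) v = a * outSum A x v + b * outSum A y v := by
  simp only [outSum, Pi.add_apply, Pi.smul_apply, smul_eq_mul, Finset.sum_add_distrib,
    Finset.mul_sum]

theorem inSum_smul_add_smul (y : V × V → ℝ) (a b : ℝ) (v : V) :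
    inSum A (a • x + b • y) v = a * inSum A x v + b * inSum A y v := by
  simp only [inSum, Pi.add_apply, Pi.smul_apply, smul_eq_mul, Finset.sum_add_distrib,
    Finset.mul_sum]

theorem convex_flowPolytope : Convex ℝ (flowPolytope A s t) := by
  rintro x ⟨hx0, hxn, hxc, hxv⟩ y ⟨hy0, hyn, hyc, hyv⟩ a b ha hb hab
  refine ⟨fun e he => by simp [hx0 e he, hy0 e he], fun e => ?_, fun v hs ht => ?_, ?_⟩
  · have := hxn e
    have := hyn e
    simp only [Pi.add_apply, Pi.smul_apply, smul_eq_mul]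
    positivity
  · rw [outSum_smul_add_smul, inSum_smul_add_smul, hxc v hs ht, hyc v hs ht]
  · rw [outSum_smul_add_smul, inSum_smul_add_smul]
    linear_combination a * hxv + b * hyv + hab

theorem IsFlow.inSum_sub_outSum_target [Fintype V] (hx : IsFlow A s t x) (hst : s ≠ t) :
    inSum A x t - outSum A x t = 1 := by
  obtain ⟨-, -, hcons, hval⟩ := hx
  -- every arc is counted once as an out-arc and once as an in-arc
  have htotal : ∑ v, (outSum A x v - inSum A x v) = 0 := by
    simp only [Finset.sum_sub_distrib, outSum, inSum, Finset.sum_fiberwise, sub_self]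
  rw [Fintype.sum_eq_add s t hst fun v hv => by rw [hcons v hv.1 hv.2, sub_self]] at htotal
  linarith

variable {p : List V}

theorem mem_pathEdges_of_chi_ne_zero {e : V × V} (h : chi p e ≠ 0) : e ∈ pathEdges p := by
  by_contra h'
  simp [chi, h'] at h

theorem IsPath.outSum_chi (hp : IsPath A s t p) (v : V) :
    outSum A (chi p) v = if v ∈ p ∧ v ≠ t then 1 else 0 := by
  obtain ⟨hc, -, hlast, hnd⟩ := hp
  split_ifs with h
  · obtain ⟨w, hw⟩ := exists_mem_pathEdges_of_getLast?_ne h.1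
      (by rw [hlast]; exact fun h' => h.2 (Option.some_inj.1 h').symm)
    rw [outSum_eq_sum (S := {(v, w)}) (by simpa using List.IsChain.rel_of_mem_pathEdges hc hw)
      fun e he he1 => ?_, Finset.sum_singleton]
    · simp [chi, hw]
    · obtain ⟨u, w'⟩ := e
      simp only at he1
      subst he1
      simp [snd_eq_of_mem_pathEdges hnd (mem_pathEdges_of_chi_ne_zero he) hw]
  · rw [outSum_eq_sum (S := ∅) (by simp) fun e he he1 => ?_, Finset.sum_empty]
    obtain ⟨u, w⟩ := e
    have he := mem_pathEdges_of_chi_ne_zero he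
    simp only at he1
    subst he1
    exact absurd ⟨(mem_of_mem_pathEdges he).1, fst_ne_of_getLast?_eq hnd hlast he⟩ h

theorem IsPath.inSum_chi (hp : IsPath A s t p) (v : V) :
    inSum A (chi p) v = if v ∈ p ∧ v ≠ s then 1 else 0 := by
  obtain ⟨hc, hhead, -, hnd⟩ := hp
  split_ifs with h
  · obtain ⟨u, hu⟩ := exists_mem_pathEdges_of_head?_ne h.1
      (by rw [hhead]; exact fun h' => h.2 (Option.some_inj.1 h').symm)
    rw [inSum_eq_sum (S := {(u, v)}) (by simpa using List.IsChain.rel_of_mem_pathEdges hc hu)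
      fun e he he2 => ?_, Finset.sum_singleton]
    · simp [chi, hu]
    · obtain ⟨u', w⟩ := e
      simp only at he2
      subst he2
      simp [fst_eq_of_mem_pathEdges hnd (mem_pathEdges_of_chi_ne_zero he) hu]
  · rw [inSum_eq_sum (S := ∅) (by simp) fun e he he2 => ?_, Finset.sum_empty]
    obtain ⟨u, w⟩ := e
    have he := mem_pathEdges_of_chi_ne_zero he
    simp only at he2
    subst he2
    exact absurd ⟨(mem_of_mem_pathEdges he).2, snd_ne_of_head?_eq hnd hhead he⟩ h

theorem IsPath.chi_mem_flowPolytope (hp : IsPath A s t p) (hst : s ≠ t) :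
    chi p ∈ flowPolytope A s t := by
  refine ⟨fun ⟨u, v⟩ he => ?_, fun e => ?_, fun v hs ht => ?_, ?_⟩
  · simp only [chi, ite_eq_right_iff, one_ne_zero, imp_false]
    exact fun h => he (List.IsChain.rel_of_mem_pathEdges hp.1 h)
  · unfold chi
    split_ifs <;> norm_num
  · rw [hp.outSum_chi, hp.inSum_chi]
    simp [hs, ht]
  · rw [hp.outSum_chi, hp.inSum_chi]
    simp [hst, List.mem_of_mem_head? hp.2.1]

end Flows

theorem isExposed_setOf_forall_eq_zero {ι : Type*} {S : Set (ι → ℝ)} (F : Finset ι)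
    (hS : ∀ y ∈ S, ∀ i ∈ F, 0 ≤ y i) : IsExposed ℝ S {y ∈ S | ∀ i ∈ F, y i = 0} := by
  rintro ⟨y₀, hy₀S, hy₀⟩
  refine ⟨-∑ i ∈ F, ContinuousLinearMap.proj i, ?_⟩
  ext y
  simp only [Set.mem_ofPred_eq, neg_apply, sum_apply, ContinuousLinearMap.proj_apply,
    neg_le_neg_iff]
  constructor
  · rintro ⟨hyS, hy⟩
    exact ⟨hyS, fun z hz => by rw [Finset.sum_eq_zero hy]; exact Finset.sum_nonneg (hS z hz)⟩
  · rintro ⟨hyS, hmax⟩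
    refine ⟨hyS, (Finset.sum_eq_zero_iff_of_nonneg (hS y hyS)).1
      (le_antisymm ?_ (Finset.sum_nonneg (hS y hyS)))⟩
    simpa [Finset.sum_eq_zero hy₀] using hmax y₀ hy₀S

section Noncrossing

variable {V : Type*} [DecidableEq V] {A : Finset (V × V)} {s t : V} {p q C α β Z : List V}
  {a b v w : V} {x : V × V → ℝ}

theorem inSum_source_eq_zero (hp : IsPath A s t p) (hq : IsPath A s t q)
    (hsupp : ∀ e, x e ≠ 0 → e ∈ pathEdges p ∨ e ∈ pathEdges q) : inSum A x s = 0 := by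
  rw [inSum_eq_sum (S := ∅) (by simp) fun e he hes => ?_, Finset.sum_empty]
  obtain ⟨u, v⟩ := e
  rcases hsupp _ he with h | h
  · exact absurd hes (snd_ne_of_head?_eq hp.2.2.2 hp.2.1 h)
  · exact absurd hes (snd_ne_of_head?_eq hq.2.2.2 hq.2.1 h)

theorem outSum_target_eq_zero (hp : IsPath A s t p) (hq : IsPath A s t q)
    (hsupp : ∀ e, x e ≠ 0 → e ∈ pathEdges p ∨ e ∈ pathEdges q) : outSum A x t = 0 := by
  rw [outSum_eq_sum (S := ∅) (by simp) fun e he het => ?_, Finset.sum_empty]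
  obtain ⟨u, v⟩ := e
  rcases hsupp _ he with h | h
  · exact absurd het (fst_ne_of_getLast?_eq hp.2.2.2 hp.2.2.1 h)
  · exact absurd het (fst_ne_of_getLast?_eq hq.2.2.2 hq.2.2.1 h)

theorem outSum_eq_of_mem_pathEdges (hp : IsPath A s t p) (hq : IsPath A s t q)
    (hsupp : ∀ e, x e ≠ 0 → e ∈ pathEdges p ∨ e ∈ pathEdges q) {z w : V}
    (hzw : (z, w) ∈ pathEdges p) (hzq : z ∉ q ∨ (z, w) ∈ pathEdges q) :
    outSum A x z = x (z, w) := by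
  rw [outSum_eq_sum (S := {(z, w)}) (by simpa using List.IsChain.rel_of_mem_pathEdges hp.1 hzw)
    fun e he hez => ?_, Finset.sum_singleton]
  obtain ⟨u, w'⟩ := e
  simp only at hez
  subst hez
  rcases hsupp _ he with h | h
  · simp [snd_eq_of_mem_pathEdges hp.2.2.2 h hzw]
  · rcases hzq with hzq | hzq
    · exact absurd (mem_of_mem_pathEdges h).1 hzq
    · simp [snd_eq_of_mem_pathEdges hq.2.2.2 h hzq]

theorem inSum_eq_of_mem_pathEdges (hp : IsPath A s t p) (hq : IsPath A s t q)
    (hsupp : ∀ e, x e ≠ 0 → e ∈ pathEdges p ∨ e ∈ pathEdges q) {y z : V}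
    (hyz : (y, z) ∈ pathEdges p) (hzq : z ∉ q ∨ (y, z) ∈ pathEdges q) :
    inSum A x z = x (y, z) := by
  rw [inSum_eq_sum (S := {(y, z)}) (by simpa using List.IsChain.rel_of_mem_pathEdges hp.1 hyz)
    fun e he hez => ?_, Finset.sum_singleton]
  obtain ⟨y', u⟩ := e
  simp only at hez
  subst hez
  rcases hsupp _ he with h | h
  · simp [fst_eq_of_mem_pathEdges hp.2.2.2 h hyz]
  · rcases hzq with hzq | hzq
    · exact absurd (mem_of_mem_pathEdges h).2 hzq
    · simp [fst_eq_of_mem_pathEdges hq.2.2.2 h hzq]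

namespace IsFlow

theorem eq_of_adjacent_arcs (hx : IsFlow A s t x) (hp : IsPath A s t p) (hq : IsPath A s t q)
    (hsupp : ∀ e, x e ≠ 0 → e ∈ pathEdges p ∨ e ∈ pathEdges q) {y z w : V}
    (hyz : (y, z) ∈ pathEdges p) (hzw : (z, w) ∈ pathEdges p)
    (hzq : z ∉ q ∨ (y, z) ∈ pathEdges q ∧ (z, w) ∈ pathEdges q) : x (y, z) = x (z, w) := by
  rw [← inSum_eq_of_mem_pathEdges hp hq hsupp hyz (hzq.imp_right And.left),
    ← outSum_eq_of_mem_pathEdges hp hq hsupp hzw (hzq.imp_right And.right),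
    hx.2.2.1 z (snd_ne_of_head?_eq hp.2.2.2 hp.2.1 hyz)
      (fst_ne_of_getLast?_eq hp.2.2.2 hp.2.2.1 hzw)]

theorem eq_on_segment (hx : IsFlow A s t x) (hp : IsPath A s t p) (hq : IsPath A s t q)
    (hsupp : ∀ e, x e ≠ 0 → e ∈ pathEdges p ∨ e ∈ pathEdges q) {l : List V} (hl : l <:+: p)
    (hlq : ∀ y z w, (y, z) ∈ pathEdges l → (z, w) ∈ pathEdges l →
      z ∉ q ∨ (y, z) ∈ pathEdges q ∧ (z, w) ∈ pathEdges q)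
    {e e' : V × V} (he : e ∈ pathEdges l) (he' : e' ∈ pathEdges l) : x e = x e' :=
  eq_of_forall_adjacent_arcs (fun y z w h₁ h₂ => hx.eq_of_adjacent_arcs hp hq hsupp
    (hl.pathEdges_subset h₁) (hl.pathEdges_subset h₂) (hlq y z w h₁ h₂)) he he'

theorem eq_one_of_common_prefix (hx : IsFlow A s t x) (hp : IsPath A s t p)
    (hq : IsPath A s t q) (hsupp : ∀ e, x e ≠ 0 → e ∈ pathEdges p ∨ e ∈ pathEdges q)
    {l : List V} (hlp : l <+: p) (hlq : l <+: q) {e : V × V} (he : e ∈ pathEdges l) :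
    x e = 1 := by
  rcases l with _ | ⟨u, _ | ⟨v, l⟩⟩
  · simp [pathEdges] at he
  · simp [pathEdges] at he
  obtain rfl : u = s := by
    obtain ⟨r, hr⟩ := hlp
    simpa [← hr] using hp.2.1
  have hsv : (u, v) ∈ pathEdges (u :: v :: l) := by simp [pathEdges_cons_cons]
  have hsvp := hlp.isInfix.pathEdges_subset hsv
  have hsvq := hlq.isInfix.pathEdges_subset hsv
  rw [hx.eq_on_segment hp hq hsupp hlp.isInfix (fun _ _ _ h₁ h₂ =>
    Or.inr ⟨hlq.isInfix.pathEdges_subset h₁, hlq.isInfix.pathEdges_subset h₂⟩) he hsv]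
  have hval := hx.2.2.2
  rwa [outSum_eq_of_mem_pathEdges hp hq hsupp hsvp (Or.inr hsvq),
    inSum_source_eq_zero hp hq hsupp, sub_zero] at hval

theorem eq_one_of_common_suffix [Fintype V] (hx : IsFlow A s t x) (hp : IsPath A s t p)
    (hq : IsPath A s t q) (hsupp : ∀ e, x e ≠ 0 → e ∈ pathEdges p ∨ e ∈ pathEdges q)
    (hst : s ≠ t) {l : List V} (hlp : l <:+ p) (hlq : l <:+ q) {e : V × V}
    (he : e ∈ pathEdges l) : x e = 1 := by
  rcases l.eq_nil_or_concat' with rfl | ⟨L, t', rfl⟩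
  · simp [pathEdges] at he
  obtain rfl : t' = t := by
    obtain ⟨r, hr⟩ := hlp
    simpa [← hr, ← List.append_assoc] using hp.2.2.1
  rcases L.eq_nil_or_concat' with rfl | ⟨L, y, rfl⟩
  · simp [pathEdges] at he
  have hyt : (y, t') ∈ pathEdges (L ++ [y] ++ [t']) := mem_pathEdges_iff.2 ⟨L, [], by simp⟩
  have hytp := hlp.isInfix.pathEdges_subset hyt
  have hytq := hlq.isInfix.pathEdges_subset hyt
  rw [hx.eq_on_segment hp hq hsupp hlp.isInfix (fun _ _ _ h₁ h₂ =>
    Or.inr ⟨hlq.isInfix.pathEdges_subset h₁, hlq.isInfix.pathEdges_subset h₂⟩) he hyt]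
  have hval := hx.inSum_sub_outSum_target hst
  rwa [inSum_eq_of_mem_pathEdges hp hq hsupp hytp (Or.inr hytq),
    outSum_target_eq_zero hp hq hsupp, sub_zero] at hval

theorem outSum_eq_one_of_common_prefix (hx : IsFlow A s t x) (hp : IsPath A s t p)
    (hq : IsPath A s t q) (hsupp : ∀ e, x e ≠ 0 → e ∈ pathEdges p ∨ e ∈ pathEdges q)
    {C : List V} {a : V} (hCp : C ++ [a] <+: p) (hCq : C ++ [a] <+: q) (hat : a ≠ t) :
    outSum A x a = 1 := by
  rcases C.eq_nil_or_concat' with rfl | ⟨C, c, rfl⟩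
  · obtain rfl : a = s := by
      obtain ⟨r, hr⟩ := hCp
      simpa [← hr] using hp.2.1
    have hval := hx.2.2.2
    rwa [inSum_source_eq_zero hp hq hsupp, sub_zero] at hval
  · have hca : (c, a) ∈ pathEdges (C ++ [c] ++ [a]) := mem_pathEdges_iff.2 ⟨C, [], by simp⟩
    have hcap := hCp.isInfix.pathEdges_subset hca
    rw [hx.2.2.1 a (snd_ne_of_head?_eq hp.2.2.2 hp.2.1 hcap) hat,
      inSum_eq_of_mem_pathEdges hp hq hsupp hcap (Or.inr (hCq.isInfix.pathEdges_subset hca))]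
    exact hx.eq_one_of_common_prefix hp hq hsupp hCp hCq hca

theorem eq_of_mem_pathEdges_of_not_mem (hx : IsFlow A s t x) (hp : IsPath A s t p)
    (hq : IsPath A s t q) (hsupp : ∀ e, x e ≠ 0 → e ∈ pathEdges p ∨ e ∈ pathEdges q)
    (hpd : p = C ++ a :: (α ++ b :: Z)) (hqd : q = C ++ a :: (β ++ b :: Z))
    (hα : ∀ z ∈ α, z ∉ q) (hv : (a, v) ∈ pathEdges (a :: (α ++ [b]))) {e : V × V}
    (hep : e ∈ pathEdges p) (heq : e ∉ pathEdges q) : x e = x (a, v) := by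
  have hl : a :: (α ++ [b]) <:+: p := ⟨C, Z, by rw [hpd]; simp⟩
  have hnd := hl.nodup hp.2.2.2
  rw [hpd, pathEdges_detour] at hep
  simp only [List.mem_append] at hep
  rcases hep with h | h | h
  · exact absurd (List.IsInfix.pathEdges_subset ⟨[], β ++ b :: Z, by rw [hqd]; simp⟩ h) heq
  · refine hx.eq_on_segment hp hq hsupp hl (fun y z w' h₁ h₂ => Or.inl (hα z ?_)) h hv
    have hza : z ≠ a := snd_ne_of_head?_eq hnd rfl h₁
    have hzb : z ≠ b :=
      fst_ne_of_getLast?_eq hnd (by rw [← List.cons_append, List.getLast?_concat]) h₂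
    have hz := (mem_of_mem_pathEdges h₁).2
    simp only [List.mem_cons, List.mem_append, List.not_mem_nil, or_false] at hz
    tauto
  · exact absurd (List.IsInfix.pathEdges_subset ⟨C ++ a :: β, [], by rw [hqd]; simp⟩ h) heq

theorem sum_branch_eq_one (hx : IsFlow A s t x) (hp : IsPath A s t p) (hq : IsPath A s t q)
    (hsupp : ∀ e, x e ≠ 0 → e ∈ pathEdges p ∨ e ∈ pathEdges q)
    (hpd : p = C ++ a :: (α ++ b :: Z)) (hqd : q = C ++ a :: (β ++ b :: Z)) (hvw : v ≠ w)
    (hv : (a, v) ∈ pathEdges (a :: (α ++ [b]))) (hw : (a, w) ∈ pathEdges (a :: (β ++ [b]))) :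
    x (a, v) + x (a, w) = 1 := by
  have hvp : (a, v) ∈ pathEdges p := List.IsInfix.pathEdges_subset ⟨C, Z, by rw [hpd]; simp⟩ hv
  have hwq : (a, w) ∈ pathEdges q := List.IsInfix.pathEdges_subset ⟨C, Z, by rw [hqd]; simp⟩ hw
  have hout : outSum A x a = x (a, v) + x (a, w) := by
    rw [outSum_eq_sum (S := {(a, v), (a, w)}) ?_ fun e he hea => ?_,
      Finset.sum_pair (by simpa using hvw)]
    · simp [List.IsChain.rel_of_mem_pathEdges hp.1 hvp,
        List.IsChain.rel_of_mem_pathEdges hq.1 hwq]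
    · obtain ⟨u, u'⟩ := e
      simp only at hea
      subst hea
      rcases hsupp _ he with h | h
      · simp [snd_eq_of_mem_pathEdges hp.2.2.2 h hvp]
      · simp [snd_eq_of_mem_pathEdges hq.2.2.2 h hwq]
  rw [← hout]
  exact hx.outSum_eq_one_of_common_prefix hp hq hsupp (C := C) ⟨α ++ b :: Z, by rw [hpd]; simp⟩
    ⟨β ++ b :: Z, by rw [hqd]; simp⟩ (fst_ne_of_getLast?_eq hp.2.2.2 hp.2.2.1 hvp)

theorem eq_one_of_mem_pathEdges_of_mem [Fintype V] (hx : IsFlow A s t x)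
    (hp : IsPath A s t p) (hq : IsPath A s t q)
    (hsupp : ∀ e, x e ≠ 0 → e ∈ pathEdges p ∨ e ∈ pathEdges q) (hst : s ≠ t)
    (hpd : p = C ++ a :: (α ++ b :: Z)) (hqd : q = C ++ a :: (β ++ b :: Z))
    (hα : ∀ z ∈ α, z ∉ q) (hvw : v ≠ w) (hv : (a, v) ∈ pathEdges (a :: (α ++ [b])))
    (hw : (a, w) ∈ pathEdges (a :: (β ++ [b]))) {e : V × V} (hep : e ∈ pathEdges p)
    (heq : e ∈ pathEdges q) : x e = 1 := by
  rw [hpd, pathEdges_detour] at hep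
  simp only [List.mem_append] at hep
  rcases hep with h | h | h
  · exact hx.eq_one_of_common_prefix hp hq hsupp ⟨α ++ b :: Z, by rw [hpd]; simp⟩
      ⟨β ++ b :: Z, by rw [hqd]; simp⟩ h
  · exact absurd heq (not_mem_pathEdges_of_detour hp.2.2.2 hq.2.2.2 hpd hqd hα hvw hv hw h)
  · exact hx.eq_one_of_common_suffix hp hq hsupp hst ⟨C ++ a :: α, by rw [hpd]; simp⟩
      ⟨C ++ a :: β, by rw [hqd]; simp⟩ h

theorem mem_segment_of_not_crossing [Fintype V] (hx : IsFlow A s t x) (hp : IsPath A s t p)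
    (hq : IsPath A s t q) (hsupp : ∀ e, x e ≠ 0 → e ∈ pathEdges p ∨ e ∈ pathEdges q)
    (hpq : p ≠ q) (hc : ¬ Crossing p q) : x ∈ segment ℝ (chi p) (chi q) := by
  obtain ⟨C, a, α, β, b, Z, v, w, hpd, hqd, hα, hβ, hvw, hv, hw⟩ := exists_detour hp hq hpq hc
  have hsum := hx.sum_branch_eq_one hp hq hsupp hpd hqd hvw hv hw
  refine ⟨x (a, v), x (a, w), hx.2.1 _, hx.2.1 _, hsum, funext fun e => ?_⟩
  simp only [Pi.add_apply, Pi.smul_apply, smul_eq_mul, chi]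
  by_cases hep : e ∈ pathEdges p <;> by_cases heq : e ∈ pathEdges q <;>
    simp only [hep, heq, if_true, if_false, mul_one, mul_zero, add_zero, zero_add]
  · rw [hsum, hx.eq_one_of_mem_pathEdges_of_mem hp hq hsupp (hp.source_ne_target_of_ne hq hpq)
      hpd hqd hα hvw hv hw hep heq]
  · exact (hx.eq_of_mem_pathEdges_of_not_mem hp hq hsupp hpd hqd hα hv hep heq).symm
  · exact (hx.eq_of_mem_pathEdges_of_not_mem hq hp (fun e he => (hsupp e he).symm) hqd hpd hβ hw
      heq hep).symm
  · by_contra h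
    rcases hsupp e (Ne.symm h) with h' | h' <;> contradiction

end IsFlow

theorem adjacentVerts_of_not_crossing [Fintype V] (hp : IsPath A s t p) (hq : IsPath A s t q)
    (hpq : p ≠ q) (hc : ¬ Crossing p q) :
    AdjacentVerts (flowPolytope A s t) (chi p) (chi q) := by
  have hst := hp.source_ne_target_of_ne hq hpq
  refine ⟨fun h => hpq (hp.eq_of_chi_eq hq h), ?_⟩
  set F := A \ ((pathEdges p).toFinset ∪ (pathEdges q).toFinset)
  have hface : segment ℝ (chi p) (chi q) = {y ∈ flowPolytope A s t | ∀ e ∈ F, y e = 0} := by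
    refine Set.Subset.antisymm (fun y hy => ⟨convex_flowPolytope.segment_subset
      (hp.chi_mem_flowPolytope hst) (hq.chi_mem_flowPolytope hst) hy, ?_⟩)
      fun y ⟨hy, hy0⟩ => IsFlow.mem_segment_of_not_crossing hy hp hq ?_ hpq hc
    · obtain ⟨a, b, -, -, -, rfl⟩ := hy
      intro e he
      simp only [F, Finset.mem_sdiff, Finset.mem_union, List.mem_toFinset, not_or] at he
      simp [chi, he.2.1, he.2.2]
    · intro e he
      by_contra h
      have heA : e ∈ A := by_contra fun hA => he (hy.1 e hA)
      have hF : e ∈ F := by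
        simp only [F, Finset.mem_sdiff, Finset.mem_union, List.mem_toFinset]
        exact ⟨heA, h⟩
      exact he (hy0 e hF)
  rw [hface]
  exact isExposed_setOf_forall_eq_zero F fun y hy e _ => hy.2.1 e

end Noncrossing

/-- If `χ^P` and `χ^Q` are distinct nonadjacent vertices of the flow polytope, there is a
distinct pair of vertices `χ^R`, `χ^S` with the same midpoint; hence the flow polytope
is a combinatorial polytope in the sense of Naddef and Pulleyblank. -/
theorem stmt8 (A : Finset (V × V)) (s t : V) (hA : Acyclic A)
    (p q : List V) (hp : IsPath A s t p) (hq : IsPath A s t q)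
    (hne : chi p ≠ chi q)
    (hnonadj : ¬ AdjacentVerts (flowPolytope A s t) (chi p) (chi q)) :
    ∃ r u : List V, IsPath A s t r ∧ IsPath A s t u ∧
      (1 / 2 : ℝ) • (chi p + chi q) = (1 / 2 : ℝ) • (chi r + chi u) ∧
      ({chi r, chi u} : Set ((V × V) → ℝ)) ≠ {chi p, chi q} := by
  have hpq : p ≠ q := fun h => hne (h ▸ rfl)
  by_cases hc : Crossing p q
  · obtain ⟨r, u, hr, hu, hsum, hrp, hrq⟩ := exists_swap_of_crossing hA hp hq hc
    refine ⟨r, u, hr, hu, by rw [hsum], fun h => ?_⟩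
    rcases (h ▸ Set.mem_insert _ _ : chi r ∈ ({chi p, chi q} : Set _)) with h | h
    · exact hrp (hr.eq_of_chi_eq hp h)
    · exact hrq (hr.eq_of_chi_eq hq h)
  · exact absurd (adjacentVerts_of_not_crossing hp hq hpq hc) hnonadj
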